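/- For a differentiable matrix curve W(τ) satisfying W' = γ(WΣ − Tr(WΣWᵀ)W) with Σ symmetric PSD, the derivative of ‖W‖_F² equals 2γ·Tr(WΣWᵀ)·(1 − ‖W‖_F²); in particular if ‖W(0)‖_F ≤ 1 then ‖W(τ)‖_F ≤ 1 for all τ ≥ 0. -/

import Mathlib

/-!
Expanding `‖W‖_F² = Tr(W Wᵀ)` entrywise, its derivative is `2 Tr(W' Wᵀ)`, and substituting the
flow gives `2γ g (1 - ‖W‖_F²)` with `g = Tr(W Σ Wᵀ)`. Writing `G` for an antiderivative of `g`, the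
quantity `(‖W‖_F² - 1) · exp(2γ G)` then has derivative zero, so `‖W‖_F² - 1` never changes sign.
-/

open Matrix

namespace Matrix

variable {m n : Type*} [Fintype m] [Fintype n]

theorem trace_smul_sub_mul_transpose {R : Type*} [CommRing R] (γ : R) (S : Matrix n n R)
    (W : Matrix m n R) :
    ((γ • (W * S - (W * S * Wᵀ).trace • W)) * Wᵀ).trace =
      γ * (W * S * Wᵀ).trace * (1 - (W * Wᵀ).trace) := by
  simp only [Matrix.smul_mul, Matrix.sub_mul, trace_smul, trace_sub, smul_eq_mul]
  ring

theorem hasDerivAt_trace_mul_transpose_self {W : ℝ → Matrix m n ℝ} {W' : Matrix m n ℝ} {τ : ℝ}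
    (hW : ∀ i j, HasDerivAt (fun t => W t i j) (W' i j) τ) :
    HasDerivAt (fun t => (W t * (W t)ᵀ).trace) (2 * (W' * (W τ)ᵀ).trace) τ := by
  have hsum : ∀ A B : Matrix m n ℝ,
      (A * Bᵀ).trace = ∑ i, ∑ j, A i j * B i j := by
    intro A B
    simp [trace, mul_apply]
  simp only [hsum, Finset.mul_sum]
  refine HasDerivAt.fun_sum fun i _ => HasDerivAt.fun_sum fun j _ => ?_
  exact ((hW i j).fun_mul (hW i j)).congr_deriv (by ring)

end Matrix

theorem sub_one_mul_exp_integral_eq {f g : ℝ → ℝ} {c : ℝ} (hg : Continuous g)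
    (hf : ∀ t, HasDerivAt f (c * g t * (1 - f t)) t) (t : ℝ) :
    (f t - 1) * Real.exp (c * ∫ s in (0 : ℝ)..t, g s) = f 0 - 1 := by
  set G : ℝ → ℝ := fun t => ∫ s in (0 : ℝ)..t, g s
  have hG : ∀ t, HasDerivAt G (g t) t := fun t =>
    intervalIntegral.integral_hasDerivAt_right (hg.intervalIntegrable _ _)
      hg.aestronglyMeasurable.stronglyMeasurableAtFilter hg.continuousAt
  have hderiv : ∀ t, HasDerivAt (fun s => (f s - 1) * Real.exp (c * G s)) 0 t := fun t =>
    (((hf t).sub_const 1).mul ((hG t).const_mul c).exp).congr_deriv (by ring)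
  simpa [G] using is_const_of_deriv_eq_zero (fun s => (hderiv s).differentiableAt)
    (fun s => (hderiv s).deriv) t 0

theorem le_one_of_hasDerivAt_mul_one_sub {f g : ℝ → ℝ} {c : ℝ} (hg : Continuous g)
    (hf : ∀ t, HasDerivAt f (c * g t * (1 - f t)) t) (h0 : f 0 ≤ 1) (t : ℝ) : f t ≤ 1 := by
  have hconst := sub_one_mul_exp_integral_eq hg hf t
  have hexp := Real.exp_pos (c * ∫ s in (0 : ℝ)..t, g s)
  nlinarith

theorem stmt4_general {m n : ℕ} (γ : ℝ)
    (S : Matrix (Fin n) (Fin n) ℝ)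
    (W : ℝ → Matrix (Fin m) (Fin n) ℝ)
    (hW : ∀ τ : ℝ, ∀ i j, HasDerivAt (fun t => W t i j)
      (γ * ((W τ * S) i j - (W τ * S * (W τ)ᵀ).trace * W τ i j)) τ) :
    (∀ τ : ℝ, HasDerivAt (fun t => (W t * (W t)ᵀ).trace)
      (2 * γ * (W τ * S * (W τ)ᵀ).trace * (1 - (W τ * (W τ)ᵀ).trace)) τ) ∧
    (Real.sqrt ((W 0 * (W 0)ᵀ).trace) ≤ 1 →
      ∀ τ : ℝ, 0 ≤ τ → Real.sqrt ((W τ * (W τ)ᵀ).trace) ≤ 1) := by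
  have hderiv : ∀ τ, HasDerivAt (fun t => (W t * (W t)ᵀ).trace)
      (2 * γ * (W τ * S * (W τ)ᵀ).trace * (1 - (W τ * (W τ)ᵀ).trace)) τ := fun τ => by
    have h := hasDerivAt_trace_mul_transpose_self
      (W' := γ • (W τ * S - (W τ * S * (W τ)ᵀ).trace • W τ)) fun i j => by simpa using hW τ i j
    rw [trace_smul_sub_mul_transpose] at h
    exact h.congr_deriv (by ring)
  have hWcont : Continuous W :=
    continuous_pi fun i => continuous_pi fun j => continuous_iff_continuousAt.mpr fun t =>
      (hW t i j).continuousAt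
  have hgcont : Continuous fun t => (W t * S * (W t)ᵀ).trace :=
    ((hWcont.matrix_mul continuous_const).matrix_mul hWcont.matrix_transpose).matrix_trace
  refine ⟨hderiv, fun h0 τ _ => Real.sqrt_le_one.mpr ?_⟩
  exact le_one_of_hasDerivAt_mul_one_sub hgcont hderiv (Real.sqrt_le_one.mp h0) τ

theorem stmt4 {m n : ℕ} (γ : ℝ) (hγ : 0 < γ)
    (S : Matrix (Fin n) (Fin n) ℝ) (hsym : Sᵀ = S)
    (hpsd : ∀ v : Fin n → ℝ, 0 ≤ v ⬝ᵥ S.mulVec v)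
    (W : ℝ → Matrix (Fin m) (Fin n) ℝ)
    (hW : ∀ τ : ℝ, ∀ i j, HasDerivAt (fun t => W t i j)
      (γ * ((W τ * S) i j - (W τ * S * (W τ)ᵀ).trace * W τ i j)) τ) :
    (∀ τ : ℝ, HasDerivAt (fun t => (W t * (W t)ᵀ).trace)
      (2 * γ * (W τ * S * (W τ)ᵀ).trace * (1 - (W τ * (W τ)ᵀ).trace)) τ) ∧
    (Real.sqrt ((W 0 * (W 0)ᵀ).trace) ≤ 1 →
      ∀ τ : ℝ, 0 ≤ τ → Real.sqrt ((W τ * (W τ)ᵀ).trace) ≤ 1) :=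
  stmt4_general γ S W hW
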